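/- Let Λ be a normal greedoid over a finite alphabet Σ with an aligned polymatroid representation ρ, and let x₁⋯x_r ∈ Λ be a basic (maximum-length) word. Then for every letter y ∈ Σ there exist indices j, k with 0 ≤ j < k ≤ r such that for all i with 0 ≤ i ≤ r: y ∈ Γ[x₁⋯x_i] if and only if j ≤ i < k (where the length-0 prefix is the empty word ε). In particular the set of prefixes of which y is a continuation forms a nonempty contiguous window. -/

import Mathlib

namespace PaperPG

def letters {A : Type*} (w : List A) : Set A := {x | x ∈ w}

/-- A greedoid over alphabet `A`: a nonempty simple hereditary language with exchange. -/
structure Greedoid (A : Type*) where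
  lang : Set (List A)
  lang_nonempty : lang.Nonempty
  simple : ∀ w ∈ lang, w.Nodup
  hereditary : ∀ α β : List A, α ++ β ∈ lang → α ∈ lang
  exchange : ∀ α ∈ lang, ∀ β ∈ lang, β.length < α.length →
      ∃ x ∈ letters α, β ++ [x] ∈ lang

/-- Kernel of a flat: union of the letter sets of its members. -/
def flatKernel {A : Type*} (F : Set (List A)) : Set A := {y : A | ∃ β ∈ F, y ∈ β}

namespace Greedoid

variable {A : Type*} (G : Greedoid A)

/-- `X` is feasible if it is the set of letters of a feasible word. -/
def Feasible (X : Set A) : Prop := ∃ α ∈ G.lang, letters α = X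

/-- The interval property. -/
def IntervalProperty : Prop :=
  ∀ X Y Z : Set A, G.Feasible X → G.Feasible Y → G.Feasible Z →
    X ⊆ Y → Y ⊆ Z → ∀ x : A, x ∉ Z →
      G.Feasible (X ∪ {x}) → G.Feasible (Z ∪ {x}) → G.Feasible (Y ∪ {x})

/-- A loop is a letter occurring in no feasible word. -/
def IsLoop (x : A) : Prop := ∀ α ∈ G.lang, x ∉ α

/-- A greedoid is normal if it has no loops. -/
def Normal : Prop := ∀ x : A, ¬ G.IsLoop x

/-- Greedoid rank: maximum length of a feasible word with letters inside `X`. -/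
noncomputable def rank (X : Set A) : ℕ :=
  sSup {n : ℕ | ∃ α ∈ G.lang, letters α ⊆ X ∧ α.length = n}

/-- Greedoid span. -/
def spanR (X : Set A) : Set A := {y : A | G.rank (X ∪ {y}) = G.rank X}

/-- Kernel of a set. -/
def kernel (X : Set A) : Set A :=
  {y : A | ∃ β ∈ G.lang, letters β ⊆ G.spanR X ∧ y ∈ β}

/-- Continuations of a word. -/
def cont (α : List A) : Set A := {x : A | α ++ [x] ∈ G.lang}

/-- The flat (equivalence class under equal continuations) of a word. -/
def flatOf (α : List A) : Set (List A) := {β ∈ G.lang | G.cont β = G.cont α}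

def IsFlat (F : Set (List A)) : Prop := ∃ α ∈ G.lang, F = G.flatOf α


/-- Order on flats: `[α] ⊑ [β]` iff some `αγ ∈ Λ` with `αγ ∼ β`. -/
def flatLE (F F' : Set (List A)) : Prop :=
  ∃ α ∈ F, ∃ γ : List A, α ++ γ ∈ G.lang ∧ (α ++ γ) ∈ F'

def flatLT (F F' : Set (List A)) : Prop := G.flatLE F F' ∧ F ≠ F'

/-- Covering relation on flats. -/
def flatCovBy (F F' : Set (List A)) : Prop :=
  G.flatLT F F' ∧ ∀ E : Set (List A), G.IsFlat E → G.flatLT F E → G.flatLT E F' → False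

/-- `M` is a meet of the flats `F` and `F'`. -/
def IsMeet (M F F' : Set (List A)) : Prop :=
  G.IsFlat M ∧ G.flatLE M F ∧ G.flatLE M F' ∧
    ∀ E : Set (List A), G.IsFlat E → G.flatLE E F → G.flatLE E F' → G.flatLE E M

/-- A basic word: one of maximum length. -/
def Basic (w : List A) : Prop := w ∈ G.lang ∧ ∀ v ∈ G.lang, v.length ≤ w.length

/-- Optimism: every non-loop is a continuation of some prefix of every basic word. -/
def Optimistic : Prop :=
  ∀ y : A, ¬ G.IsLoop y → ∀ w : List A, G.Basic w →
    ∃ i ≤ w.length, y ∈ G.cont (w.take i)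

/-- The greatest representation `ρ♮`. -/
noncomputable def rhoNat (X : Set A) : ℕ :=
  sInf {n : ℕ | ∃ α ∈ G.lang, X ⊆ G.kernel (letters α) ∧ α.length = n}

end Greedoid

/-- A polymatroid rank function: normalized, monotone, submodular. -/
def IsPolymatroid {A : Type*} (ρ : Set A → ℝ) : Prop :=
  ρ ∅ = 0 ∧ (∀ X Y : Set A, X ⊆ Y → ρ X ≤ ρ Y) ∧
    ∀ X Y : Set A, ρ (X ∪ Y) + ρ (X ∩ Y) ≤ ρ X + ρ Y

/-- `ρ` represents `G`: the language consists exactly of the simple words each of whose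
prefixes of length `i` has rank `i`. -/
def Represents {A : Type*} (ρ : Set A → ℝ) (G : Greedoid A) : Prop :=
  ∀ w : List A, w ∈ G.lang ↔
    (w.Nodup ∧ ∀ i : ℕ, i < w.length → ρ (letters (w.take (i + 1))) = (i + 1 : ℝ))

/-- Polymatroid span. -/
def spanP {A : Type*} (ρ : Set A → ℝ) (X : Set A) : Set A :=
  {y : A | ρ (X ∪ {y}) = ρ X}

/-- Closed sets of a polymatroid. -/
def ClosedP {A : Type*} (ρ : Set A → ℝ) (X : Set A) : Prop := spanP ρ X = X

/-- Covering relation on the closed sets of `ρ`, ordered by inclusion. -/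
def closedCovBy {A : Type*} (ρ : Set A → ℝ) (S S' : Set A) : Prop :=
  ClosedP ρ S ∧ ClosedP ρ S' ∧ S ⊂ S' ∧
    ∀ T : Set A, ClosedP ρ T → S ⊂ T → T ⊂ S' → False

/-- Alignment of a representation. -/
def Aligned {A : Type*} (G : Greedoid A) (ρ : Set A → ℝ) : Prop :=
  ∃ φ : Set (List A) → Set A,
    (∀ F, G.IsFlat F → ClosedP ρ (φ F)) ∧
    (∀ F F', G.IsFlat F → G.IsFlat F' → G.flatLE F F' → φ F ⊆ φ F') ∧
    (∀ α ∈ G.lang, ρ (letters α) = ρ (φ (G.flatOf α))) ∧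
    (∀ α ∈ G.lang, letters α ⊆ φ (G.flatOf α)) ∧
    (∀ F F', G.IsFlat F → G.IsFlat F' → G.flatCovBy F F' → closedCovBy ρ (φ F) (φ F'))

/-- The maps `φ* : F ↦ σ_ρ(κ(F))` and `φ_* : S ↦ κ⁻¹(S)` are well-defined order-preserving
maps between the flats of `G` and the closed sets of `ρ` forming a Galois connection in
which `φ*` preserves the covering relation of the flats. -/
def GaloisPair {A : Type*} (G : Greedoid A) (ρ : Set A → ℝ) : Prop :=
  (∀ F, G.IsFlat F → ClosedP ρ (spanP ρ (flatKernel F))) ∧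
  (∀ F F', G.IsFlat F → G.IsFlat F' → G.flatLE F F' →
      spanP ρ (flatKernel F) ⊆ spanP ρ (flatKernel F')) ∧
  (∀ S, ClosedP ρ S → ∃! F, G.IsFlat F ∧ flatKernel F = G.kernel S) ∧
  (∀ S S', ClosedP ρ S → ClosedP ρ S' → S ⊆ S' →
      ∀ F F', G.IsFlat F → flatKernel F = G.kernel S →
        G.IsFlat F' → flatKernel F' = G.kernel S' → G.flatLE F F') ∧
  (∀ F, G.IsFlat F → ∀ S, ClosedP ρ S → ∀ F', G.IsFlat F' → flatKernel F' = G.kernel S →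
      (spanP ρ (flatKernel F) ⊆ S ↔ G.flatLE F F')) ∧
  (∀ F F', G.IsFlat F → G.IsFlat F' → G.flatCovBy F F' →
      closedCovBy ρ (spanP ρ (flatKernel F)) (spanP ρ (flatKernel F')))

section AuxLemmas

variable {A : Type*}

lemma letters_nil : letters ([] : List A) = ∅ := by
  ext x; simp [letters]

lemma letters_concat (α : List A) (x : A) : letters (α ++ [x]) = letters α ∪ {x} := by
  ext a; simp [letters, or_comm]

lemma dimin {ρ : Set A → ℝ} (hpm : IsPolymatroid ρ) {X Y : Set A} (hXY : X ⊆ Y) (y : A) :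
    ρ (Y ∪ {y}) - ρ Y ≤ ρ (X ∪ {y}) - ρ X := by
  by_cases hy : y ∈ Y
  · have h1 : Y ∪ {y} = Y :=
      Set.union_eq_self_of_subset_right (Set.singleton_subset_iff.mpr hy)
    have h2 := hpm.2.1 X (X ∪ {y}) Set.subset_union_left
    rw [h1]; linarith
  · have hsub := hpm.2.2 (X ∪ {y}) Y
    have h1 : (X ∪ {y}) ∪ Y = Y ∪ {y} := by
      ext a
      simp only [Set.mem_union, Set.mem_singleton_iff]
      constructor
      · rintro ((h | h) | h)
        · exact Or.inl (hXY h)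
        · exact Or.inr h
        · exact Or.inl h
      · rintro (h | h)
        · exact Or.inr h
        · exact Or.inl (Or.inr h)
    have h2 : (X ∪ {y}) ∩ Y = X := by
      ext a
      simp only [Set.mem_inter_iff, Set.mem_union, Set.mem_singleton_iff]
      constructor
      · rintro ⟨h | rfl, ha⟩
        · exact h
        · exact absurd ha hy
      · intro ha; exact ⟨Or.inl ha, hXY ha⟩
    rw [h1, h2] at hsub; linarith

lemma subset_spanP (ρ : Set A → ℝ) (X : Set A) : X ⊆ spanP ρ X := by
  intro x hx
  have h : X ∪ {x} = X :=
    Set.union_eq_self_of_subset_right (Set.singleton_subset_iff.mpr hx)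
  show ρ (X ∪ {x}) = ρ X
  rw [h]

lemma union_spanP {ρ : Set A → ℝ} (hpm : IsPolymatroid ρ) (X : Set A) (F : Finset A)
    (hF : ∀ a ∈ F, a ∈ spanP ρ X) : ρ (X ∪ ↑F) = ρ X := by
  classical
  induction F using Finset.induction_on with
  | empty => simp
  | @insert a F ha ih =>
    have hXF : ρ (X ∪ ↑F) = ρ X := ih (fun b hb => hF b (Finset.mem_insert_of_mem hb))
    have haX : ρ (X ∪ {a}) = ρ X := hF a (Finset.mem_insert_self a F)
    have hsub := hpm.2.2 (X ∪ ↑F) (X ∪ {a})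
    have h1 : (X ∪ ↑F) ∪ (X ∪ {a}) = X ∪ ↑(insert a F) := by
      ext z
      simp only [Set.mem_union, Finset.coe_insert, Set.mem_insert_iff,
        Set.mem_singleton_iff, Finset.mem_coe]
      tauto
    have h2 : ρ X ≤ ρ ((X ∪ ↑F) ∩ (X ∪ {a})) :=
      hpm.2.1 _ _ (Set.subset_inter Set.subset_union_left Set.subset_union_left)
    have h3 : ρ X ≤ ρ (X ∪ ↑(insert a F)) := hpm.2.1 _ _ Set.subset_union_left
    rw [h1] at hsub
    linarith

lemma rho_spanP [Fintype A] {ρ : Set A → ℝ} (hpm : IsPolymatroid ρ) (X : Set A) :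
    ρ (spanP ρ X) = ρ X := by
  classical
  have hfin : (spanP ρ X).Finite := Set.toFinite _
  have h := union_spanP hpm X hfin.toFinset
    (by intro a ha; rwa [Set.Finite.mem_toFinset] at ha)
  rw [Set.Finite.coe_toFinset] at h
  rwa [Set.union_eq_self_of_subset_left (subset_spanP ρ X)] at h

lemma spanP_mono {ρ : Set A → ℝ} (hpm : IsPolymatroid ρ) {X Y : Set A} (h : X ⊆ Y) :
    spanP ρ X ⊆ spanP ρ Y := by
  intro a ha
  have ha' : ρ (X ∪ {a}) = ρ X := ha
  have hsub := hpm.2.2 Y (X ∪ {a})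
  have h1 : Y ∪ (X ∪ {a}) = Y ∪ {a} := by
    rw [← Set.union_assoc, Set.union_eq_self_of_subset_right h]
  have h2 : ρ X ≤ ρ (Y ∩ (X ∪ {a})) :=
    hpm.2.1 _ _ (Set.subset_inter h Set.subset_union_left)
  have h3 : ρ Y ≤ ρ (Y ∪ {a}) := hpm.2.1 _ _ Set.subset_union_left
  show ρ (Y ∪ {a}) = ρ Y
  rw [h1] at hsub
  linarith

lemma closedP_spanP [Fintype A] {ρ : Set A → ℝ} (hpm : IsPolymatroid ρ) (X : Set A) :
    ClosedP ρ (spanP ρ X) := by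
  unfold ClosedP
  apply Set.Subset.antisymm
  · intro z hz
    have hz' : ρ (spanP ρ X ∪ {z}) = ρ (spanP ρ X) := hz
    show ρ (X ∪ {z}) = ρ X
    have h1 : ρ (X ∪ {z}) ≤ ρ (spanP ρ X ∪ {z}) :=
      hpm.2.1 _ _ (Set.union_subset_union_left _ (subset_spanP ρ X))
    have h2 := rho_spanP hpm X
    have h3 : ρ X ≤ ρ (X ∪ {z}) := hpm.2.1 _ _ Set.subset_union_left
    linarith
  · exact subset_spanP ρ _

lemma spanP_subset_closed [Fintype A] {ρ : Set A → ℝ} (hpm : IsPolymatroid ρ)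
    {X S : Set A} (hS : ClosedP ρ S) (h : X ⊆ S) : spanP ρ X ⊆ S := by
  have h2 := spanP_mono hpm h
  rwa [hS] at h2

end AuxLemmas

namespace Greedoid

variable {A : Type*} (G : Greedoid A)

lemma take_mem_lang {w : List A} (hw : w ∈ G.lang) (i : ℕ) : w.take i ∈ G.lang :=
  G.hereditary _ (w.drop i) (by rw [List.take_append_drop]; exact hw)

lemma not_cont_lt {β β' : List A} (hβ : β ∈ G.lang) (hβ' : β' ∈ G.lang)
    (hc : G.cont β = G.cont β') (h : β.length < β'.length) : False := by
  obtain ⟨x, hx, hmem⟩ := G.exchange β' hβ' β hβ h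
  have hx' : β' ++ [x] ∈ G.lang := by
    have hmem' : x ∈ G.cont β := hmem
    rw [hc] at hmem'; exact hmem'
  have hnd := G.simple _ hx'
  have hdisj := List.disjoint_of_nodup_append hnd
  exact hdisj hx (List.mem_singleton_self x)

lemma cont_length_eq {β β' : List A} (hβ : β ∈ G.lang) (hβ' : β' ∈ G.lang)
    (hc : G.cont β = G.cont β') : β.length = β'.length := by
  rcases lt_trichotomy β.length β'.length with h | h | h
  · exact absurd h (fun h => G.not_cont_lt hβ hβ' hc h)
  · exact h
  · exact absurd h (fun h => G.not_cont_lt hβ' hβ hc.symm h)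

lemma mem_flatOf_self {α : List A} (hα : α ∈ G.lang) : α ∈ G.flatOf α := ⟨hα, rfl⟩

lemma flatOf_congr {c e : List A} (h : G.cont c = G.cont e) : G.flatOf c = G.flatOf e := by
  unfold Greedoid.flatOf; rw [h]

lemma flatLE_take {w : List A} (hw : w ∈ G.lang) {i i' : ℕ} (h : i ≤ i') :
    G.flatLE (G.flatOf (w.take i)) (G.flatOf (w.take i')) := by
  have heq : w.take i ++ (w.take i').drop i = w.take i' := by
    conv_lhs => rw [show w.take i = (w.take i').take i by rw [List.take_take, min_eq_left h]]
    exact List.take_append_drop i (w.take i')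
  refine ⟨w.take i, G.mem_flatOf_self (G.take_mem_lang hw i), (w.take i').drop i, ?_, ?_⟩
  · rw [heq]; exact G.take_mem_lang hw i'
  · rw [heq]; exact G.mem_flatOf_self (G.take_mem_lang hw i')

lemma flatCovBy_of_len {α β : List A} (hα : α ∈ G.lang) (hβ : β ∈ G.lang)
    (hlen : β.length = α.length + 1) (hle : G.flatLE (G.flatOf α) (G.flatOf β)) :
    G.flatCovBy (G.flatOf α) (G.flatOf β) := by
  have hne : G.flatOf α ≠ G.flatOf β := by
    intro h
    have hmem : α ∈ G.flatOf β := h ▸ G.mem_flatOf_self hα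
    have := G.cont_length_eq hα hβ hmem.2
    omega
  refine ⟨⟨hle, hne⟩, ?_⟩
  rintro E ⟨e, he, rfl⟩ ⟨⟨a, haF, γ, hag, hagE⟩, hne1⟩ ⟨⟨b, hbE, μ, hbμ, hbF'⟩, hne2⟩
  have hla : a.length = α.length := G.cont_length_eq haF.1 hα haF.2
  have hlag : (a ++ γ).length = e.length := G.cont_length_eq hagE.1 he hagE.2
  have hlb : b.length = e.length := G.cont_length_eq hbE.1 he hbE.2
  have hlbμ : (b ++ μ).length = β.length := G.cont_length_eq hbF'.1 hβ hbF'.2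
  simp only [List.length_append] at hlag hlbμ
  have hcase : γ.length = 0 ∨ μ.length = 0 := by omega
  rcases hcase with h0 | h0
  · have hγ : γ = [] := List.length_eq_zero_iff.mp h0
    subst hγ
    rw [List.append_nil] at hagE
    exact hne1 ((G.flatOf_congr haF.2).symm.trans (G.flatOf_congr hagE.2))
  · have hμ : μ = [] := List.length_eq_zero_iff.mp h0
    subst hμ
    rw [List.append_nil] at hbF'
    exact hne2 ((G.flatOf_congr hbE.2).symm.trans (G.flatOf_congr hbF'.2))

lemma extend_to_basic {w : List A} (hw : G.Basic w) :
    ∀ n (α : List A), α ∈ G.lang → w.length - α.length = n →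
      ∃ δ ∈ G.lang, δ.length = w.length ∧ ∀ a, a ∈ α → a ∈ δ := by
  intro n
  induction n with
  | zero =>
    intro α hα h0
    exact ⟨α, hα, by have := hw.2 α hα; omega, fun a ha => ha⟩
  | succ n ih =>
    intro α hα hsucc
    have hlt : α.length < w.length := by omega
    obtain ⟨x, _, hx⟩ := G.exchange w hw.1 α hα hlt
    obtain ⟨δ, hδ, hδl, hδm⟩ := ih (α ++ [x]) hx (by simp; omega)
    exact ⟨δ, hδ, hδl, fun a ha => hδm a (by simp [ha])⟩

end Greedoid

/-- For a basic word of a normal greedoid with an aligned representation, the set of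
prefixes of which a letter `y` is a continuation is a nonempty contiguous window of
indices. -/
theorem contiguous_window {A : Type*} [Fintype A] (G : Greedoid A)
    (hnorm : G.Normal) (ρ : Set A → ℝ)
    (hpm : IsPolymatroid ρ) (hrep : Represents ρ G) (hal : Aligned G ρ)
    (w : List A) (hw : G.Basic w) :
    ∀ y : A, ∃ j k : ℕ, j < k ∧ k ≤ w.length ∧
      ∀ i : ℕ, i ≤ w.length → (y ∈ G.cont (w.take i) ↔ (j ≤ i ∧ i < k)) := by
  classical
  obtain ⟨φ, hφcl, hφmono, hφrk, hφsub, hφcov⟩ := hal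
  intro y
  have hwl := hw.1
  set r := w.length with hr
  -- rank of prefixes of feasible words
  have hranks : ∀ u ∈ G.lang, ∀ m, m ≤ u.length → ρ (letters (u.take m)) = (m : ℝ) := by
    intro u hu m hm
    cases m with
    | zero => simpa [letters_nil] using hpm.1
    | succ n =>
      have h := ((hrep u).mp hu).2 n (by omega)
      push_cast
      push_cast at h
      exact h
  have hfull : ∀ u ∈ G.lang, ρ (letters u) = (u.length : ℝ) := by
    intro u hu
    have h := hranks u hu u.length le_rfl
    rwa [List.take_length] at h
  have htake : ∀ i, w.take i ∈ G.lang := G.take_mem_lang hwl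
  have hflat : ∀ i : ℕ, G.IsFlat (G.flatOf (w.take i)) := fun i => ⟨w.take i, htake i, rfl⟩
  set S : ℕ → Set A := fun i => φ (G.flatOf (w.take i)) with hSdef
  have hSrho : ∀ i, i ≤ r → ρ (S i) = (i : ℝ) := by
    intro i hi
    have h1 := hφrk _ (htake i)
    have h2 := hranks w hwl i hi
    rw [h1] at h2
    exact h2
  have hXS : ∀ i : ℕ, letters (w.take i) ⊆ S i := fun i => hφsub _ (htake i)
  have hScl : ∀ i : ℕ, ClosedP ρ (S i) := fun i => hφcl _ (hflat i)
  have hSmono : ∀ i i' : ℕ, i ≤ i' → S i ⊆ S i' :=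
    fun i i' h => hφmono _ _ (hflat i) (hflat i') (G.flatLE_take hwl h)
  -- maximal words have no continuations
  have hcont_max : ∀ δ ∈ G.lang, δ.length = r → G.cont δ = G.cont w := by
    have hnone : ∀ v : List A, v.length = r → v ∈ G.lang → G.cont v = ∅ := by
      intro v hv hvl
      ext z
      simp only [Set.mem_empty_iff_false, iff_false]
      intro hz
      have h := hw.2 _ (hz : v ++ [z] ∈ G.lang)
      rw [List.length_append, List.length_singleton] at h
      omega
    intro δ hδ hδl
    rw [hnone δ hδl hδ, hnone w rfl hwl]
  -- a feasible word containing y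
  obtain ⟨α0, hα0, hyα0⟩ : ∃ α ∈ G.lang, y ∈ α := by
    have h := hnorm y
    unfold Greedoid.IsLoop at h
    push_neg at h
    exact h
  -- y belongs to S r
  have hySr : y ∈ S r := by
    obtain ⟨δ, hδ, hδl, hδm⟩ := G.extend_to_basic hw (r - α0.length) α0 hα0 rfl
    have hflatδ : G.flatOf δ = G.flatOf (w.take r) := by
      rw [show w.take r = w from List.take_length]
      exact G.flatOf_congr (hcont_max δ hδ hδl)
    have hsub := hφsub δ hδ
    rw [hflatδ] at hsub
    exact hsub (hδm y hyα0)
  -- ρ {y} ≥ 1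
  have hρy : (1 : ℝ) ≤ ρ {y} := by
    obtain ⟨s, t, rfl⟩ := List.append_of_mem hyα0
    have hsy : s ++ [y] ∈ G.lang := G.hereditary (s ++ [y]) t (by simpa using hα0)
    have hs : s ∈ G.lang := G.hereditary s [y] hsy
    have h1 : ρ (letters s ∪ {y}) = (s.length : ℝ) + 1 := by
      have h := hfull _ hsy
      rw [letters_concat, List.length_append, List.length_singleton] at h
      push_cast at h
      exact h
    have h2 : ρ (letters s) = (s.length : ℝ) := hfull s hs
    have h3 := dimin hpm (Set.empty_subset (letters s)) y
    rw [Set.empty_union] at h3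
    have h0 : ρ (∅ : Set A) = 0 := hpm.1
    linarith
  -- k : least index with y ∈ S k
  have hex : ∃ i, y ∈ S i := ⟨r, hySr⟩
  set k := Nat.find hex with hkdef
  have hky : y ∈ S k := Nat.find_spec hex
  have hkr : k ≤ r := Nat.find_min' hex hySr
  have hk1 : 1 ≤ k := by
    rcases Nat.eq_zero_or_pos k with h0 | h
    · exfalso
      have hy0 : y ∈ S 0 := by rw [← h0]; exact hky
      have hm : ρ {y} ≤ ρ (S 0) := hpm.2.1 _ _ (Set.singleton_subset_iff.mpr hy0)
      have h00 := hSrho 0 (Nat.zero_le r)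
      push_cast at h00
      linarith
    · exact h
  have hyk1 : y ∉ S (k - 1) := Nat.find_min hex (by omega)
  -- covering step k-1 → k
  have hlenk : (w.take k).length = (w.take (k - 1)).length + 1 := by
    rw [List.length_take, List.length_take]
    omega
  have hcov : G.flatCovBy (G.flatOf (w.take (k - 1))) (G.flatOf (w.take k)) :=
    G.flatCovBy_of_len (htake (k - 1)) (htake k) hlenk (G.flatLE_take hwl (by omega))
  have hcovS : closedCovBy ρ (S (k - 1)) (S k) := hφcov _ _ (hflat _) (hflat _) hcov
  -- the crucial rank identity
  have hT1 : ρ (S (k - 1) ∪ {y}) = (k : ℝ) := by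
    set T := spanP ρ (S (k - 1) ∪ {y}) with hTdef
    have hTcl : ClosedP ρ T := closedP_spanP hpm _
    have hST : S (k - 1) ⊆ T := Set.subset_union_left.trans (subset_spanP ρ _)
    have hyT : y ∈ T := (subset_spanP ρ _) (Set.mem_union_right _ rfl)
    have hTS : T ⊆ S k := spanP_subset_closed hpm (hScl k)
      (Set.union_subset (hSmono _ _ (by omega)) (Set.singleton_subset_iff.mpr hky))
    have hTeq : T = S k := by
      by_contra hne
      refine hcovS.2.2.2 T hTcl ⟨hST, ?_⟩ ⟨hTS, ?_⟩
      · intro h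
        exact hyk1 (h hyT)
      · intro h
        exact hne (Set.Subset.antisymm hTS h)
    have := rho_spanP hpm (S (k - 1) ∪ {y})
    rw [← hTdef, hTeq, hSrho k hkr] at this
    linarith
  -- j : least index with ρ (S j ∪ {y}) ≤ j + 1
  have hck1 : ((k - 1 : ℕ) : ℝ) = (k : ℝ) - 1 := by
    have := Nat.cast_sub hk1 (R := ℝ)
    push_cast at this ⊢
    linarith
  have hexj : ∃ i : ℕ, ρ (S i ∪ {y}) ≤ (i : ℝ) + 1 := by
    refine ⟨k - 1, ?_⟩
    rw [hT1, hck1]; linarith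
  set j := Nat.find hexj with hjdef
  have hjspec : ρ (S j ∪ {y}) ≤ (j : ℝ) + 1 := Nat.find_spec hexj
  have hjk : j ≤ k - 1 := Nat.find_min' hexj (by rw [hT1, hck1]; linarith)
  have hjr : j ≤ r := by omega
  -- final assembly
  refine ⟨j, k, by omega, hkr, ?_⟩
  intro i hir
  -- auxiliary set identities
  have hset1 : ∀ i : ℕ, (letters (w.take i) ∪ {y}) ∪ S i = S i ∪ {y} := by
    intro i
    ext z
    simp only [Set.mem_union, Set.mem_singleton_iff]
    constructor
    · rintro ((hz | hz) | hz)
      · exact Or.inl (hXS i hz)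
      · exact Or.inr hz
      · exact Or.inl hz
    · rintro (hz | hz)
      · exact Or.inr hz
      · exact Or.inl (Or.inr hz)
  constructor
  · intro hyc
    have hu : w.take i ++ [y] ∈ G.lang := hyc
    have hXyi : ρ (letters (w.take i) ∪ {y}) = (i : ℝ) + 1 := by
      have h := hfull _ hu
      rw [letters_concat, List.length_append, List.length_singleton, List.length_take] at h
      have hmin : min i r = i := by omega
      rw [hmin] at h
      push_cast at h
      exact h
    have hynS : y ∉ S i := by
      intro hyS
      have hsub : letters (w.take i) ∪ {y} ⊆ S i :=
        Set.union_subset (hXS i) (Set.singleton_subset_iff.mpr hyS)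
      have h := hpm.2.1 _ _ hsub
      rw [hXyi, hSrho i hir] at h
      linarith
    have hik : i < k := by
      by_contra h
      exact hynS (hSmono k i (by omega) hky)
    have hji : j ≤ i := by
      apply Nat.find_min' hexj
      have hsub := hpm.2.2 (letters (w.take i) ∪ {y}) (S i)
      rw [hset1 i] at hsub
      have h2 : ρ (letters (w.take i)) ≤ ρ ((letters (w.take i) ∪ {y}) ∩ S i) :=
        hpm.2.1 _ _ (Set.subset_inter Set.subset_union_left (hXS i))
      have h3 := hranks w hwl i hir
      rw [hXyi, hSrho i hir] at hsub
      linarith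
    exact ⟨hji, hik⟩
  · rintro ⟨hji, hik⟩
    have hup : ρ (S i ∪ {y}) ≤ (i : ℝ) + 1 := by
      have h := dimin hpm (hSmono j i hji) y
      rw [hSrho i hir, hSrho j hjr] at h
      linarith
    have hdown : (i : ℝ) + 1 ≤ ρ (S i ∪ {y}) := by
      have h := dimin hpm (hSmono i (k - 1) (by omega)) y
      rw [hSrho i hir, hSrho (k - 1) (by omega), hT1, hck1] at h
      linarith
    have hSiy : ρ (S i ∪ {y}) = (i : ℝ) + 1 := le_antisymm hup hdown
    have hynS : y ∉ S i := by
      intro h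
      have heq : S i ∪ {y} = S i :=
        Set.union_eq_self_of_subset_right (Set.singleton_subset_iff.mpr h)
      rw [heq, hSrho i hir] at hSiy
      linarith
    have hXyi : ρ (letters (w.take i) ∪ {y}) = (i : ℝ) + 1 := by
      have hsub := hpm.2.2 (letters (w.take i) ∪ {y}) (S i)
      have h2 : (letters (w.take i) ∪ {y}) ∩ S i = letters (w.take i) := by
        ext z
        simp only [Set.mem_inter_iff, Set.mem_union, Set.mem_singleton_iff]
        constructor
        · rintro ⟨hz | rfl, hzS⟩
          · exact hz
          · exact absurd hzS hynS
        · intro hz; exact ⟨Or.inl hz, hXS i hz⟩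
      rw [hset1 i, h2, hSrho i hir, hSiy] at hsub
      have h3 := hranks w hwl i hir
      have hle : ρ (letters (w.take i) ∪ {y}) ≤ ρ (S i ∪ {y}) :=
        hpm.2.1 _ _ (Set.union_subset_union_left _ (hXS i))
      rw [hSiy] at hle
      linarith
    have hynX : y ∉ letters (w.take i) := fun h => hynS (hXS i h)
    have hlti : (w.take i).length = i := by rw [List.length_take]; omega
    show w.take i ++ [y] ∈ G.lang
    apply (hrep _).mpr
    constructor
    · have hnd : (w.take i).Nodup := (List.take_sublist i w).nodup (G.simple w hwl)
      rw [List.nodup_append]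
      refine ⟨hnd, List.nodup_singleton y, ?_⟩
      intro z hz b hb
      rw [List.mem_singleton] at hb
      subst hb
      rintro rfl
      exact hynX hz
    · intro m hm
      rw [List.length_append, List.length_singleton, hlti] at hm
      rcases Nat.lt_or_ge m i with hmi | hmi
      · have heq : (w.take i ++ [y]).take (m + 1) = w.take (m + 1) := by
          rw [List.take_append_of_le_length (by omega : m + 1 ≤ (w.take i).length),
            List.take_take, min_eq_left (by omega : m + 1 ≤ i)]
        rw [heq]
        have h := hranks w hwl (m + 1) (by omega)
        rw [h]
        push_cast
        ring
      · have hm' : m = i := by omega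
        subst hm'
        have heq : (w.take m ++ [y]).take (m + 1) = w.take m ++ [y] := by
          apply List.take_of_length_le
          rw [List.length_append, List.length_singleton, hlti]
        rw [heq, letters_concat, hXyi]

end PaperPG
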